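/- arXiv:2510.27280 — 2 statements merged into one kernel-verified Lean document; each statement's English description precedes it below -/
import Mathlib

section
/- Let X_1, ..., X_N (with N ≥ 1) be i.i.d. random variables taking values in [0,1] with common mean μ. Let μ̂ = (1/N)·Σ_{i=1}^N X_i denote the empirical mean and σ̂² = (1/N)·Σ_{i=1}^N (X_i − μ̂)² the empirical variance. Then for every δ ∈ (0,1), with probability at least 1 − δ, μ ≤ μ̂ + sqrt(2·σ̂²·ln(3/δ)/N) + 3·ln(3/δ)/N. -/
/-!
With `L = log (3 / δ)`, Bernstein's inequality (the Chernoff bound together with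
`exp u ≤ 1 + u + u² / (2 (1 - u / 3))` for `u < 3`) is applied to two families of independent
centred variables bounded above by `1`: `μ - X i`, of variance `Var[X i]`, and
`4 (Var[X i] - (X i - μ)²)`, of variance at most `16 Var[X i]`. Each deviation event has
probability at most `δ / 3`. Outside both, writing `σ²` for the mean of the variances, the
first gives `μ - μ̂ ≤ √(2 σ² L / N) + L / (3 N)`, and the second, through
`∑ (X i - μ)² = N σ̂² + N (μ̂ - μ)²`, gives
`σ² ≤ σ̂² + (μ - μ̂)² + O(σ √(L / N) + L / N)`.
Hence `σ` may be replaced by `σ̂` at the cost of raising `L / (3 N)` to `3 L / N`.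
-/

open MeasureTheory ProbabilityTheory

open Real

lemma two_sub_mul_exp_le_two_add {x : ℝ} (hx : 0 ≤ x) : (2 - x) * exp x ≤ 2 + x := by
  rcases lt_or_ge x 2 with hx2 | hx2
  · have := exp_le_two_add_div_two_sub hx hx2
    rw [le_div_iff₀ (by linarith)] at this
    linarith
  · nlinarith [exp_pos x]

lemma two_add_le_two_sub_mul_exp {x : ℝ} (hx : x ≤ 0) : 2 + x ≤ (2 - x) * exp x := by
  have h := two_sub_mul_exp_le_two_add (neg_nonneg.2 hx)
  rw [sub_neg_eq_add, ← sub_eq_add_neg, exp_neg, mul_inv_le_iff₀ (exp_pos x)] at h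
  exact h

lemma one_sub_div_three_mul_exp_sub_one_sub_le (x : ℝ) :
    (1 - x / 3) * (exp x - 1 - x) ≤ x ^ 2 / 2 := by
  set G : ℝ → ℝ := fun y => y ^ 2 / 2 - (1 - y / 3) * (exp y - 1 - y)
  have hG : ∀ y, HasDerivAt G ((y + 2 - (2 - y) * exp y) / 3) y := fun y => by
    have := ((hasDerivAt_pow 2 y).div_const 2).sub
      (((hasDerivAt_id y).div_const 3).const_sub 1 |>.mul
        (((hasDerivAt_exp y).sub_const 1).sub (hasDerivAt_id y)))
    exact this.congr_deriv (by norm_num; ring)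
  have hGc : Continuous G := by fun_prop
  suffices G 0 ≤ G x by simpa [G] using this
  rcases le_total 0 x with hx | hx
  · refine monotoneOn_of_deriv_nonneg (convex_Ici 0) hGc.continuousOn
      (fun y _ => (hG y).differentiableAt.differentiableWithinAt) (fun y hy => ?_)
      Set.self_mem_Ici hx hx
    rw [interior_Ici] at hy
    rw [(hG y).deriv]
    linarith [two_sub_mul_exp_le_two_add (le_of_lt hy)]
  · refine antitoneOn_of_deriv_nonpos (convex_Iic 0) hGc.continuousOn
      (fun y _ => (hG y).differentiableAt.differentiableWithinAt) (fun y hy => ?_)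
      hx Set.self_mem_Iic hx
    rw [interior_Iic] at hy
    rw [(hG y).deriv]
    linarith [two_add_le_two_sub_mul_exp (le_of_lt hy)]

lemma exp_mul_le_bernstein {z l : ℝ} (hz : z ≤ 1) (hl : 0 ≤ l) (hl3 : l < 3) :
    exp (l * z) ≤ 1 + l * z + l ^ 2 / (2 * (1 - l / 3)) * z ^ 2 := by
  have hpos : 0 < 1 - l / 3 := by linarith
  have hexp : 0 ≤ exp (l * z) - 1 - l * z := by linarith [add_one_le_exp (l * z)]
  -- `l * z ≤ l`, so the factor `1 - l * z / 3` can be lowered to `1 - l / 3`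
  have h : (1 - l / 3) * (exp (l * z) - 1 - l * z) ≤ l ^ 2 * z ^ 2 / 2 := by
    rw [← mul_pow]
    exact (mul_le_mul_of_nonneg_right (by nlinarith) hexp).trans
      (one_sub_div_three_mul_exp_sub_one_sub_le (l * z))
  have key : exp (l * z) - 1 - l * z ≤ l ^ 2 / (2 * (1 - l / 3)) * z ^ 2 := by
    rw [div_mul_eq_mul_div, le_div_iff₀ (by positivity)]
    linarith
  linarith

section Bernstein

variable {Ω : Type*} [MeasurableSpace Ω] {P : Measure Ω} [IsProbabilityMeasure P]

lemma integrable_exp_mul_of_le_one {Z : Ω → ℝ} (hZ : AEStronglyMeasurable Z P)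
    (hle : ∀ᵐ ω ∂P, Z ω ≤ 1) {l : ℝ} (hl : 0 ≤ l) :
    Integrable (fun ω => exp (l * Z ω)) P := by
  refine (integrable_const (exp l)).mono' (by fun_prop) ?_
  filter_upwards [hle] with ω hω
  rw [norm_of_nonneg (exp_pos _).le, exp_le_exp]
  nlinarith

lemma mgf_le_exp_mul_variance_of_le_one {Z : Ω → ℝ} (hZ : MemLp Z 2 P)
    (hle : ∀ᵐ ω ∂P, Z ω ≤ 1) (hmean : P[Z] = 0) {l : ℝ} (hl : 0 ≤ l) (hl3 : l < 3) :
    mgf Z P l ≤ exp (l ^ 2 / (2 * (1 - l / 3)) * Var[Z; P]) := by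
  set C := l ^ 2 / (2 * (1 - l / 3))
  have hint : Integrable (fun ω => l * Z ω + C * Z ω ^ 2) P :=
    ((hZ.integrable one_le_two).const_mul l).add (hZ.integrable_sq.const_mul C)
  calc mgf Z P l ≤ ∫ ω, (1 + (l * Z ω + C * Z ω ^ 2)) ∂P := by
        refine integral_mono_ae (integrable_exp_mul_of_le_one hZ.1 hle hl)
          ((integrable_const 1).add hint) ?_
        filter_upwards [hle] with ω hω
        linarith [exp_mul_le_bernstein hω hl hl3]
    _ = 1 + C * Var[Z; P] := by
        rw [integral_add (integrable_const 1) hint, integral_add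
          ((hZ.integrable one_le_two).const_mul l) (hZ.integrable_sq.const_mul C),
          integral_const_mul, integral_const_mul, hmean,
          variance_of_integral_eq_zero hZ.aemeasurable hmean]
        simp
    _ ≤ exp (C * Var[Z; P]) := by linarith [add_one_le_exp (C * Var[Z; P])]

theorem bernstein_measure_sum_ge_le {ι : Type*} [Fintype ι] {Z : ι → Ω → ℝ}
    (hindep : iIndepFun Z P) (hmeas : ∀ i, Measurable (Z i)) (hZ : ∀ i, MemLp (Z i) 2 P)
    (hle : ∀ i, ∀ᵐ ω ∂P, Z i ω ≤ 1) (hmean : ∀ i, P[Z i] = 0)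
    {v : ℝ} (hv : ∑ i, Var[Z i; P] ≤ v) {L : ℝ} (hL : 0 < L) :
    P {ω | √(2 * v * L) + L / 3 ≤ ∑ i, Z i ω} ≤ ENNReal.ofReal (exp (-L)) := by
  have hv0 : 0 ≤ v := (Finset.sum_nonneg fun i _ => variance_nonneg _ _).trans hv
  rcases hv0.eq_or_lt with rfl | hvpos
  -- zero variance: every `Z i` vanishes a.e. while the threshold `L / 3` is positive
  · refine (le_of_eq ?_).trans zero_le
    have hvar : ∀ i, Var[Z i; P] = 0 := fun i =>
      (Finset.sum_eq_zero_iff_of_nonneg fun j _ => variance_nonneg _ _).1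
        (le_antisymm hv (Finset.sum_nonneg fun j _ => variance_nonneg _ _)) i (Finset.mem_univ i)
    have hzero : ∀ᵐ ω ∂P, ∀ i, Z i ω = 0 := ae_all_iff.2 fun i => by
      simpa [hmean i] using ae_eq_integral_of_variance_eq_zero (hZ i) (hvar i)
    refine measure_mono_null (fun ω hω => ?_) (ae_iff.1 hzero)
    simp only [Set.mem_ofPred_eq, mul_zero, zero_mul, Real.sqrt_zero, zero_add] at hω
    intro h
    simp only [h, Finset.sum_const_zero] at hω
    linarith
  set w := √(2 * v * L)
  have hw : 0 < w := Real.sqrt_pos.2 (by positivity)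
  have hw2 : w ^ 2 = 2 * v * L := Real.sq_sqrt (by positivity)
  -- chosen so that the Chernoff exponent `-l * (w + L / 3) + C * v` is exactly `-L`
  set l := 6 * L / (3 * w + 2 * L)
  have hl : 0 ≤ l := by positivity
  have hl3 : l < 3 := by rw [div_lt_iff₀ (by positivity)]; linarith
  set C := l ^ 2 / (2 * (1 - l / 3))
  have hC : 0 ≤ C := div_nonneg (sq_nonneg l) (by linarith)
  have hexponent : -l * (w + L / 3) + C * v = -L := by
    have hv' : v = w ^ 2 / (2 * L) := by field_simp; linarith
    have h13 : 1 - l / 3 = 3 * w / (3 * w + 2 * L) := by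
      simp only [l]; field_simp; ring
    simp only [C, h13, hv']
    simp only [l]
    field_simp
    ring
  have hmgf : mgf (∑ i, Z i) P l ≤ exp (C * v) := calc
    mgf (∑ i, Z i) P l = ∏ i, mgf (Z i) P l := hindep.mgf_sum hmeas _
    _ ≤ ∏ i, exp (C * Var[Z i; P]) := Finset.prod_le_prod (fun i _ => mgf_nonneg)
        fun i _ => mgf_le_exp_mul_variance_of_le_one (hZ i) (hle i) (hmean i) hl hl3
    _ = exp (C * ∑ i, Var[Z i; P]) := by rw [← exp_sum, Finset.mul_sum]
    _ ≤ exp (C * v) := exp_le_exp.2 (mul_le_mul_of_nonneg_left hv hC)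
  have hchernoff := measure_ge_le_exp_mul_mgf (w + L / 3) hl
    (hindep.integrable_exp_mul_sum hmeas fun i _ =>
      integrable_exp_mul_of_le_one (hZ i).1 (hle i) hl) (X := ∑ i, Z i)
  rw [← ofReal_measureReal]
  refine ENNReal.ofReal_le_ofReal ?_
  calc P.real {ω | w + L / 3 ≤ ∑ i, Z i ω}
        ≤ exp (-l * (w + L / 3)) * mgf (∑ i, Z i) P l := by
        simpa only [Finset.sum_apply] using hchernoff
    _ ≤ exp (-l * (w + L / 3)) * exp (C * v) := by gcongr
    _ = exp (-L) := by rw [← exp_add, hexponent]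

end Bernstein

section BoundedSamples

variable {Ω : Type*} [MeasurableSpace Ω] {P : Measure Ω} [IsProbabilityMeasure P]

lemma variance_sq_sub_integral_le {X : Ω → ℝ} (hX : AEMeasurable X P)
    (h : ∀ᵐ ω ∂P, |X ω - P[X]| ≤ 1) :
    Var[fun ω => (X ω - P[X]) ^ 2; P] ≤ Var[X; P] := by
  have hY : ∀ᵐ ω ∂P, (X ω - P[X]) ^ 2 ∈ Set.Icc 0 1 := by
    filter_upwards [h] with ω hω
    exact ⟨sq_nonneg _, by nlinarith [abs_le.1 hω]⟩
  have hmean : P[fun ω => (X ω - P[X]) ^ 2] = Var[X; P] := (variance_eq_integral hX).symm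
  calc Var[fun ω => (X ω - P[X]) ^ 2; P] ≤ (1 - Var[X; P]) * (Var[X; P] - 0) := by
        simpa only [hmean] using variance_le_sub_mul_sub hY (by fun_prop)
    _ ≤ Var[X; P] := by nlinarith [variance_nonneg X P]

lemma integral_mem_Icc_of_ae_mem_Icc {X : Ω → ℝ} (hX : AEStronglyMeasurable X P) {a b : ℝ}
    (hbound : ∀ᵐ ω ∂P, X ω ∈ Set.Icc a b) : P[X] ∈ Set.Icc a b :=
  (convex_Icc a b).integral_mem isClosed_Icc hbound
    ((memLp_of_bounded hbound hX 2).integrable one_le_two)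

lemma variance_le_one_div_four {X : Ω → ℝ} (hX : AEMeasurable X P)
    (hbound : ∀ᵐ ω ∂P, X ω ∈ Set.Icc 0 1) : Var[X; P] ≤ 1 / 4 := by
  have := variance_le_sq_of_bounded hbound hX
  norm_num at this ⊢
  exact this

lemma ofReal_one_sub_le_of_measure_compl_le {s : Set Ω} {r : ℝ} (hr : 0 ≤ r)
    (h : P sᶜ ≤ ENNReal.ofReal r) : ENNReal.ofReal (1 - r) ≤ P s := by
  rw [ENNReal.ofReal_sub 1 hr, ENNReal.ofReal_one, tsub_le_iff_right]
  calc 1 = P (s ∪ sᶜ) := by rw [Set.union_compl_self, measure_univ]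
    _ ≤ P s + P sᶜ := measure_union_le s sᶜ
    _ ≤ P s + ENNReal.ofReal r := by gcongr

variable {ι : Type*} [Fintype ι] {X : ι → Ω → ℝ} {μ : ℝ}

lemma measure_sum_sub_ge_le (hindep : iIndepFun X P) (hmeas : ∀ i, Measurable (X i))
    (hbound : ∀ i, ∀ᵐ ω ∂P, X i ω ∈ Set.Icc 0 1) (hmean : ∀ i, P[X i] = μ)
    {L : ℝ} (hL : 0 < L) :
    P {ω | √(2 * (∑ i, Var[X i; P]) * L) + L / 3 ≤ ∑ i, (μ - X i ω)} ≤
      ENNReal.ofReal (exp (-L)) := by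
  have hμ : ∀ i, μ ∈ Set.Icc 0 1 := fun i =>
    hmean i ▸ integral_mem_Icc_of_ae_mem_Icc (hmeas i).aestronglyMeasurable (hbound i)
  refine bernstein_measure_sum_ge_le (Z := fun i ω => μ - X i ω)
    (hindep.comp (fun _ x => μ - x) fun _ => by fun_prop) (fun i => by fun_prop)
    (fun i => memLp_of_bounded (a := μ - 1) (b := μ) ?_ (by fun_prop) 2) (fun i => ?_)
    (fun i => ?_) (le_of_eq ?_) hL
  · filter_upwards [hbound i] with ω hω
    exact ⟨by linarith [hω.2], by linarith [hω.1]⟩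
  · filter_upwards [hbound i] with ω hω
    linarith [hω.1, (hμ i).2]
  · rw [integral_sub (integrable_const μ)
      ((memLp_of_bounded (hbound i) (hmeas i).aestronglyMeasurable 2).integrable one_le_two),
      hmean i]
    simp
  · exact Finset.sum_congr rfl fun i _ => variance_const_sub (hmeas i).aestronglyMeasurable μ

lemma measure_sum_variance_sub_sq_ge_le (hindep : iIndepFun X P) (hmeas : ∀ i, Measurable (X i))
    (hbound : ∀ i, ∀ᵐ ω ∂P, X i ω ∈ Set.Icc 0 1) (hmean : ∀ i, P[X i] = μ)
    {L : ℝ} (hL : 0 < L) :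
    P {ω | √(2 * (16 * ∑ i, Var[X i; P]) * L) + L / 3 ≤
        ∑ i, 4 * (Var[X i; P] - (X i ω - μ) ^ 2)} ≤ ENNReal.ofReal (exp (-L)) := by
  have hμ : ∀ i, μ ∈ Set.Icc 0 1 := fun i =>
    hmean i ▸ integral_mem_Icc_of_ae_mem_Icc (hmeas i).aestronglyMeasurable (hbound i)
  have hvar : ∀ i, Var[X i; P] ≤ 1 / 4 := fun i =>
    variance_le_one_div_four (hmeas i).aemeasurable (hbound i)
  have hdev : ∀ i, ∀ᵐ ω ∂P, |X i ω - μ| ≤ 1 := fun i => by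
    filter_upwards [hbound i] with ω hω
    exact abs_le.2 ⟨by linarith [hω.1, (hμ i).2], by linarith [hω.2, (hμ i).1]⟩
  refine bernstein_measure_sum_ge_le (Z := fun i ω => 4 * (Var[X i; P] - (X i ω - μ) ^ 2))
    (hindep.comp (fun i x => 4 * (Var[X i; P] - (x - μ) ^ 2)) fun _ => by fun_prop)
    (fun i => by fun_prop)
    (fun i => memLp_of_bounded (a := -4) (b := 1) ?_ (by fun_prop) 2) (fun i => ?_)
    (fun i => ?_) ?_ hL
  · filter_upwards [hdev i] with ω hω
    have := abs_le.1 hω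
    exact ⟨by nlinarith [variance_nonneg (X i) P], by nlinarith [hvar i]⟩
  · exact ae_of_all _ fun ω => by nlinarith [hvar i]
  · have hsq : P[fun ω => (X i ω - μ) ^ 2] = Var[X i; P] := by
      rw [variance_eq_integral (hmeas i).aemeasurable, hmean i]
    have hint : Integrable (fun ω => (X i ω - μ) ^ 2) P :=
      ((memLp_of_bounded (hbound i) (hmeas i).aestronglyMeasurable 2).sub
        (memLp_const μ)).integrable_sq
    rw [integral_const_mul, integral_sub (integrable_const _) hint, hsq]
    simp
  · rw [Finset.mul_sum]
    refine Finset.sum_le_sum fun i _ => ?_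
    rw [variance_const_mul, variance_const_sub (by fun_prop)]
    have := variance_sq_sub_integral_le (hmeas i).aemeasurable ((hmean i).symm ▸ hdev i)
    rw [hmean i] at this
    linarith

end BoundedSamples

lemma le_mul_add_nine_mul_of_sq_le {a b s c v : ℝ} (hb : 0 < b) (ha0 : 0 ≤ a)
    (ha : a ^ 2 = 6 * b) (hs0 : 0 ≤ s) (hs : s ≤ 1 / 2) (hv : 0 ≤ v)
    (hc : c ≤ a * s + b) (hs2 : s ^ 2 ≤ v ^ 2 + c ^ 2 + a * s + b / 4) :
    c ≤ a * v + 9 * b := by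
  by_contra! hcv
  set t := a * s
  have hav : 0 ≤ a * v := mul_nonneg ha0 hv
  have ht : 8 * b < t := by linarith
  have hc2 : c ^ 2 ≤ (t + b) ^ 2 := by nlinarith
  -- multiply `hs2` by `a ^ 2 = 6 * b` and use `a * v < t - 8 * b`
  have h6b : t ^ 2 ≤ (t - 8 * b) ^ 2 + 6 * b * ((t + b) ^ 2 + t + b / 4) := by
    have h := mul_le_mul_of_nonneg_left hs2 (sq_nonneg a)
    have hav2 : (a * v) ^ 2 ≤ (t - 8 * b) ^ 2 := by nlinarith
    nlinarith
  have hkey : 10 * t ≤ 131 / 2 * b + 6 * (t + b) ^ 2 := by nlinarith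
  have ht2 : t ^ 2 ≤ 3 / 2 * b := by
    rw [mul_pow, ha]; nlinarith [mul_le_mul hs hs hs0 (by norm_num : (0 : ℝ) ≤ 1 / 2)]
  have ht_small : t < 3 / 16 := by nlinarith
  nlinarith

section SampleStatistics

variable {N : ℕ}

noncomputable def sampleMean (x : Fin N → ℝ) : ℝ := (1 / N) * ∑ i, x i

noncomputable def sampleVariance (x : Fin N → ℝ) : ℝ :=
  (1 / N) * ∑ i, (x i - sampleMean x) ^ 2

lemma sampleVariance_nonneg (x : Fin N → ℝ) : 0 ≤ sampleVariance x :=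
  mul_nonneg (by positivity) (Finset.sum_nonneg fun _ _ => sq_nonneg _)

lemma sum_sub_sq_eq_mul_sampleVariance_add (hN : 0 < N) (x : Fin N → ℝ) (m : ℝ) :
    ∑ i, (x i - m) ^ 2 = N * sampleVariance x + N * (sampleMean x - m) ^ 2 := by
  have hN' : (N : ℝ) ≠ 0 := by positivity
  have hcentred : ∑ i, (x i - sampleMean x) = 0 := by
    simp only [Finset.sum_sub_distrib, Finset.sum_const, Finset.card_univ, Fintype.card_fin,
      nsmul_eq_mul, sampleMean]
    field_simp
    ring
  calc ∑ i, (x i - m) ^ 2 = ∑ i, ((x i - sampleMean x) ^ 2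
        + 2 * (sampleMean x - m) * (x i - sampleMean x) + (sampleMean x - m) ^ 2) :=
        Finset.sum_congr rfl fun i _ => by ring
    _ = _ := by
        rw [Finset.sum_add_distrib, Finset.sum_add_distrib, ← Finset.mul_sum, hcentred]
        simp only [mul_zero, add_zero, Finset.sum_const, Finset.card_univ, Fintype.card_fin,
          nsmul_eq_mul, sampleVariance]
        field_simp

end SampleStatistics

lemma le_sampleMean_add_of_sum_lt {N : ℕ} (hN : 0 < N) (x : Fin N → ℝ) {μ V L : ℝ}
    (hV0 : 0 ≤ V) (hV : V ≤ N / 4) (hL : 0 < L)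
    (hmean : ∑ i, (μ - x i) < √(2 * V * L) + L / 3)
    (hvar : 4 * (V - ∑ i, (x i - μ) ^ 2) < √(2 * (16 * V) * L) + L / 3) :
    μ ≤ sampleMean x + √(2 * sampleVariance x * L / N) + 3 * L / N := by
  have hN' : (0 : ℝ) < N := by exact_mod_cast hN
  set a := √(2 * L / N)
  set b := L / (3 * N)
  set s := √(V / N)
  set v := √(sampleVariance x)
  set c := μ - sampleMean x
  have hb : 0 < b := by positivity
  have ha2 : a ^ 2 = 2 * L / N := Real.sq_sqrt (by positivity)
  have hs2 : s ^ 2 = V / N := Real.sq_sqrt (by positivity)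
  have hv2 : v ^ 2 = sampleVariance x := Real.sq_sqrt (sampleVariance_nonneg x)
  have hs : s ≤ 1 / 2 := by
    rw [show (1 / 2 : ℝ) = √(1 / 4) by rw [show (1 / 4 : ℝ) = (1 / 2) ^ 2 by norm_num,
      Real.sqrt_sq (by norm_num)]]
    exact Real.sqrt_le_sqrt (by rw [div_le_iff₀ hN']; linarith)
  have hsqrtV : √(2 * V * L) = N * (a * s) := by
    rw [Real.sqrt_eq_iff_eq_sq (by positivity) (by positivity), mul_pow, mul_pow, ha2, hs2]
    field_simp
  have hsqrt16V : √(2 * (16 * V) * L) = 4 * (N * (a * s)) := by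
    rw [Real.sqrt_eq_iff_eq_sq (by positivity) (by positivity), mul_pow, mul_pow, mul_pow, ha2,
      hs2]
    field_simp
    ring
  have hc : c ≤ a * s + b := by
    have hsum : ∑ i, (μ - x i) = N * c := by
      simp only [Finset.sum_sub_distrib, Finset.sum_const, Finset.card_univ, Fintype.card_fin,
        nsmul_eq_mul, c, sampleMean]
      field_simp
    rw [hsum, hsqrtV] at hmean
    have : N * c ≤ N * (a * s + b) := by simp only [b] at *; field_simp at *; linarith
    exact le_of_mul_le_mul_left this hN'
  have hs2c : s ^ 2 ≤ v ^ 2 + c ^ 2 + a * s + b / 4 := by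
    rw [sum_sub_sq_eq_mul_sampleVariance_add hN, hsqrt16V, ← hv2] at hvar
    have : N * s ^ 2 ≤ N * (v ^ 2 + c ^ 2 + a * s + b / 4) := by
      rw [hs2]
      simp only [b, c] at *
      field_simp at *
      nlinarith
    exact le_of_mul_le_mul_left this hN'
  have ha6 : a ^ 2 = 6 * b := by rw [ha2]; simp only [b]; field_simp; ring
  have key := le_mul_add_nine_mul_of_sq_le hb (Real.sqrt_nonneg _) ha6 (Real.sqrt_nonneg _) hs
    (Real.sqrt_nonneg _) hc hs2c
  have hsqrt : √(2 * sampleVariance x * L / N) = a * v := by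
    have := sampleVariance_nonneg x
    rw [Real.sqrt_eq_iff_eq_sq (by positivity) (mul_nonneg (Real.sqrt_nonneg _)
      (Real.sqrt_nonneg _)), mul_pow, ha2, hv2]
    field_simp
  rw [hsqrt, show 3 * L / N = 9 * b by simp only [b]; field_simp; ring]
  linarith

theorem empirical_bernstein_upper_general
    {Ω : Type*} [MeasurableSpace Ω] (P : Measure Ω) [IsProbabilityMeasure P]
    (N : ℕ) (hN : 1 ≤ N) (X : Fin N → Ω → ℝ) (μ : ℝ)
    (hmeas : ∀ i, Measurable (X i))
    (hindep : iIndepFun X P)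
    (hbound : ∀ i ω, X i ω ∈ Set.Icc (0 : ℝ) 1)
    (hmean : ∀ i, ∫ ω, X i ω ∂P = μ)
    (δ : ℝ) (hδ : δ ∈ Set.Ioo (0 : ℝ) 1) :
    ENNReal.ofReal (1 - δ) ≤
      P {ω | μ ≤ (1 / N) * ∑ i, X i ω
          + Real.sqrt (2 * ((1 / N) * ∑ i, (X i ω - (1 / N) * ∑ j, X j ω) ^ 2)
              * Real.log (3 / δ) / N)
          + 3 * Real.log (3 / δ) / N} := by
  obtain ⟨hδ0, hδ1⟩ := hδ
  set L := Real.log (3 / δ)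
  have hL : 0 < L := Real.log_pos (by rw [lt_div_iff₀ hδ0]; linarith)
  have hexpL : exp (-L) = δ / 3 := by rw [← Real.log_inv, exp_log (by positivity), inv_div]
  have hbound' : ∀ i, ∀ᵐ ω ∂P, X i ω ∈ Set.Icc 0 1 := fun i => ae_of_all _ (hbound i)
  set V := ∑ i, Var[X i; P]
  have hV0 : 0 ≤ V := Finset.sum_nonneg fun i _ => variance_nonneg _ _
  have hV : V ≤ N / 4 := by
    have := Finset.sum_le_sum (s := Finset.univ) fun i _ =>
      variance_le_one_div_four (hmeas i).aemeasurable (hbound' i)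
    simp only [Finset.sum_const, Finset.card_univ, Fintype.card_fin, nsmul_eq_mul] at this
    linarith
  have hdevMean := measure_sum_sub_ge_le hindep hmeas hbound' hmean hL
  have hdevVar := measure_sum_variance_sub_sq_ge_le hindep hmeas hbound' hmean hL
  refine ofReal_one_sub_le_of_measure_compl_le hδ0.le ?_
  calc _ ≤ P ({ω | √(2 * V * L) + L / 3 ≤ ∑ i, (μ - X i ω)} ∪
        {ω | √(2 * (16 * V) * L) + L / 3 ≤ ∑ i, 4 * (Var[X i; P] - (X i ω - μ) ^ 2)}) := by
        refine measure_mono fun ω hω => ?_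
        by_contra h
        simp only [Set.mem_union, Set.mem_ofPred_eq, not_or, not_le] at h
        obtain ⟨hlow, hvar⟩ := h
        rw [← Finset.mul_sum, Finset.sum_sub_distrib] at hvar
        exact hω (le_sampleMean_add_of_sum_lt hN (fun i => X i ω) hV0 hV hL hlow hvar)
    _ ≤ ENNReal.ofReal (δ / 3) + ENNReal.ofReal (δ / 3) :=
        (measure_union_le _ _).trans (by rw [← hexpL]; gcongr)
    _ ≤ ENNReal.ofReal δ := by
        rw [← ENNReal.ofReal_add (by positivity) (by positivity)]
        exact ENNReal.ofReal_le_ofReal (by linarith)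

/-- Empirical Bernstein (one-sided upper) inequality: for i.i.d. random variables
`X 1, ..., X N` with values in `[0,1]` and common mean `μ`, with probability at least
`1 - δ` we have `μ ≤ μ̂ + sqrt (2 σ̂² ln(3/δ) / N) + 3 ln(3/δ) / N`, where `μ̂` is the
empirical mean and `σ̂²` the empirical variance. -/
theorem empirical_bernstein_upper
    {Ω : Type*} [MeasurableSpace Ω] (P : Measure Ω) [IsProbabilityMeasure P]
    (N : ℕ) (hN : 1 ≤ N) (X : Fin N → Ω → ℝ) (μ : ℝ)
    (hmeas : ∀ i, Measurable (X i))
    (hindep : iIndepFun X P)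
    (hident : ∀ i j, IdentDistrib (X i) (X j) P P)
    (hbound : ∀ i ω, X i ω ∈ Set.Icc (0 : ℝ) 1)
    (hmean : ∀ i, ∫ ω, X i ω ∂P = μ)
    (δ : ℝ) (hδ : δ ∈ Set.Ioo (0 : ℝ) 1) :
    ENNReal.ofReal (1 - δ) ≤
      P {ω | μ ≤ (1 / N) * ∑ i, X i ω
          + Real.sqrt (2 * ((1 / N) * ∑ i, (X i ω - (1 / N) * ∑ j, X j ω) ^ 2)
              * Real.log (3 / δ) / N)
          + 3 * Real.log (3 / δ) / N} :=
  empirical_bernstein_upper_general P N hN X μ hmeas hindep hbound hmean δ hδ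
end

section
/- Let X_1, ..., X_N (with N ≥ 1) be i.i.d. random variables taking values in [0,1] with common mean μ. Let μ̂ = (1/N)·Σ_{i=1}^N X_i denote the empirical mean and σ̂² = (1/N)·Σ_{i=1}^N (X_i − μ̂)² the empirical variance. Then for every δ ∈ (0,1), with probability at least 1 − δ, μ ≥ μ̂ − sqrt(2·σ̂²·ln(3/δ)/N) − 3·ln(3/δ)/N. -/
/-!
Two one-sided Bernstein inequalities at confidence level `δ / 3` each: one for the centred sum
`∑ (X i - μ)`, and one for `∑ (Var[X i] - (X i - μ) ^ 2)`, whose summands are bounded above by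
`1 / 4` and have second moment at most `Var[X i]`. Outside the two bad events the first bounds
the deviation `μ̂ - μ` by the true average variance, the second bounds that variance by the
empirical one plus `(μ̂ - μ) ^ 2`, and eliminating the true variance is elementary algebra.
-/

open Real Nat MeasureTheory ProbabilityTheory

theorem Real.exp_le_one_add_add_sq_div_of_lt_three {x : ℝ} (h0 : 0 ≤ x) (h3 : x < 3) :
    exp x ≤ 1 + x + x ^ 2 / (2 * (1 - x / 3)) := by
  have hexp : HasSum (fun n : ℕ => x ^ (n + 2) / (n + 2)!) (exp x - (1 + x)) := by
    have := (hasSum_nat_add_iff' 2).2 (NormedSpace.expSeries_div_hasSum_exp x)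
    simpa [Finset.sum_range_succ, ← Real.exp_eq_exp_ℝ] using this
  have hgeom : HasSum (fun n : ℕ => x ^ 2 / 2 * (x / 3) ^ n) (x ^ 2 / 2 * (1 - x / 3)⁻¹) :=
    (hasSum_geometric_of_lt_one (by positivity) (by linarith)).mul_left _
  have hterm (n : ℕ) : x ^ (n + 2) / (n + 2)! ≤ x ^ 2 / 2 * (x / 3) ^ n := by
    have hfact : (2 * 3 ^ n : ℝ) ≤ (n + 2)! := by
      have := @Nat.factorial_mul_pow_le_factorial 2 n
      rw [add_comm 2 n] at this
      exact_mod_cast this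
    rw [div_le_iff₀ (by positivity)]
    calc x ^ (n + 2) = x ^ 2 / 2 * (x / 3) ^ n * (2 * 3 ^ n) := by
          rw [div_pow]; field_simp; ring
      _ ≤ x ^ 2 / 2 * (x / 3) ^ n * (n + 2)! := by gcongr
  have hsplit : x ^ 2 / (2 * (1 - x / 3)) = x ^ 2 / 2 * (1 - x / 3)⁻¹ := by
    rw [div_mul_eq_div_div, div_eq_mul_inv]
  linarith [hasSum_le hterm hexp hgeom]

theorem Real.exp_le_one_add_add_sq_div_two_of_nonpos {x : ℝ} (hx : x ≤ 0) :
    exp x ≤ 1 + x + x ^ 2 / 2 := by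
  have hneg : 1 + -x + (-x) ^ 2 / 2 ≤ exp (-x) := quadratic_le_exp_of_nonneg (by linarith)
  have hprod : 1 ≤ (1 + x + x ^ 2 / 2) * (1 + -x + (-x) ^ 2 / 2) := by
    nlinarith [sq_nonneg (x ^ 2)]
  rw [← mul_le_mul_iff_left₀ (exp_pos (-x)), ← exp_add, add_neg_cancel, exp_zero]
  nlinarith [sq_nonneg (x + 1)]

theorem Real.exp_le_one_add_add_sq_div_of_le {x a : ℝ} (hxa : x ≤ a) (ha0 : 0 ≤ a)
    (ha3 : a < 3) : exp x ≤ 1 + x + x ^ 2 / (2 * (1 - a / 3)) := by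
  rcases le_total x 0 with hx | hx
  · calc exp x ≤ 1 + x + x ^ 2 / 2 := exp_le_one_add_add_sq_div_two_of_nonpos hx
      _ ≤ 1 + x + x ^ 2 / (2 * (1 - a / 3)) := by
        gcongr
        · linarith
        · linarith
  · calc exp x ≤ 1 + x + x ^ 2 / (2 * (1 - x / 3)) :=
          exp_le_one_add_add_sq_div_of_lt_three hx (by linarith)
      _ ≤ 1 + x + x ^ 2 / (2 * (1 - a / 3)) := by
        gcongr
        linarith

section Bernstein

variable {Ω : Type*} [MeasurableSpace Ω] {P : Measure Ω} [IsProbabilityMeasure P]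

theorem ofReal_one_sub_le_measure_of_compl_subset_union {T A B : Set Ω} (h : Tᶜ ⊆ A ∪ B)
    {ε : ℝ} (hε : P.real A + P.real B ≤ ε) : ENNReal.ofReal (1 - ε) ≤ P T := by
  have hcover : 1 ≤ P.real T + P.real Tᶜ := by
    simpa [Set.union_compl_self] using measureReal_union_le (μ := P) T Tᶜ
  have hbad : P.real Tᶜ ≤ P.real A + P.real B :=
    (measureReal_mono h).trans (measureReal_union_le A B)
  rw [← ofReal_measureReal]
  exact ENNReal.ofReal_le_ofReal (by linarith)

theorem integrable_exp_mul_of_ae_le {W : Ω → ℝ} {b t : ℝ} (hW : AEStronglyMeasurable W P)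
    (hb : ∀ᵐ ω ∂P, W ω ≤ b) (ht : 0 ≤ t) : Integrable (fun ω => exp (t * W ω)) P := by
  refine (integrable_const (exp (t * b))).mono' (by fun_prop) ?_
  filter_upwards [hb] with ω hω
  rw [norm_of_nonneg (exp_pos _).le]
  gcongr

theorem mgf_le_exp_bernstein {W : Ω → ℝ} {b t : ℝ} (hW : MemLp W 2 P) (hmean : P[W] = 0)
    (hb : ∀ᵐ ω ∂P, W ω ≤ b) (hb0 : 0 ≤ b) (ht : 0 ≤ t) (htb : t * b < 3) :
    mgf W P t ≤ exp (t ^ 2 * (∫ ω, W ω ^ 2 ∂P) / (2 * (1 - t * b / 3))) := by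
  set c := t ^ 2 / (2 * (1 - t * b / 3))
  have hW1 : Integrable W P := hW.integrable one_le_two
  have hW2 : Integrable (fun ω => W ω ^ 2) P := hW.integrable_sq
  have hquad : ∀ᵐ ω ∂P, exp (t * W ω) ≤ 1 + t * W ω + c * W ω ^ 2 := by
    filter_upwards [hb] with ω hω
    have := exp_le_one_add_add_sq_div_of_le (mul_le_mul_of_nonneg_left hω ht)
      (mul_nonneg ht hb0) htb
    rwa [mul_pow, mul_div_right_comm] at this
  have hlin : Integrable (fun ω => 1 + t * W ω) P := (integrable_const 1).add (hW1.const_mul t)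
  calc mgf W P t ≤ ∫ ω, (1 + t * W ω + c * W ω ^ 2) ∂P :=
        integral_mono_ae (integrable_exp_mul_of_ae_le hW.aestronglyMeasurable hb ht)
          (hlin.add (hW2.const_mul c)) hquad
    _ = 1 + c * ∫ ω, W ω ^ 2 ∂P := by
        rw [integral_add hlin (hW2.const_mul c),
          integral_add (integrable_const 1) (hW1.const_mul t), integral_const_mul,
          integral_const_mul, hmean]
        simp
    _ ≤ exp (c * ∫ ω, W ω ^ 2 ∂P) := by linarith [add_one_le_exp (c * ∫ ω, W ω ^ 2 ∂P)]
    _ = exp (t ^ 2 * (∫ ω, W ω ^ 2 ∂P) / (2 * (1 - t * b / 3))) := by rw [mul_div_right_comm]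

variable {ι : Type*} [Fintype ι] {W : ι → Ω → ℝ} {b V : ℝ}

theorem mgf_sum_le_exp_bernstein {t : ℝ} (hmeas : ∀ i, Measurable (W i))
    (hindep : iIndepFun W P) (hL2 : ∀ i, MemLp (W i) 2 P) (hmean : ∀ i, P[W i] = 0)
    (hb : ∀ i, ∀ᵐ ω ∂P, W i ω ≤ b) (hb0 : 0 ≤ b) (hV : ∑ i, ∫ ω, W i ω ^ 2 ∂P ≤ V)
    (ht : 0 ≤ t) (htb : t * b < 3) :
    mgf (∑ i, W i) P t ≤ exp (t ^ 2 * V / (2 * (1 - t * b / 3))) := by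
  rw [hindep.mgf_sum hmeas]
  calc ∏ i, mgf (W i) P t
      ≤ ∏ i, exp (t ^ 2 * (∫ ω, W i ω ^ 2 ∂P) / (2 * (1 - t * b / 3))) :=
        Finset.prod_le_prod (fun i _ => mgf_nonneg) fun i _ =>
          mgf_le_exp_bernstein (hL2 i) (hmean i) (hb i) hb0 ht htb
    _ = exp (t ^ 2 * (∑ i, ∫ ω, W i ω ^ 2 ∂P) / (2 * (1 - t * b / 3))) := by
        rw [← exp_sum, Finset.mul_sum, Finset.sum_div]
    _ ≤ exp (t ^ 2 * V / (2 * (1 - t * b / 3))) := by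
        gcongr
        linarith

theorem measureReal_sum_ge_le_bernstein_of_pos {s : ℝ} (hmeas : ∀ i, Measurable (W i))
    (hindep : iIndepFun W P) (hL2 : ∀ i, MemLp (W i) 2 P) (hmean : ∀ i, P[W i] = 0)
    (hb : ∀ i, ∀ᵐ ω ∂P, W i ω ≤ b) (hb0 : 0 ≤ b) (hV : ∑ i, ∫ ω, W i ω ^ 2 ∂P ≤ V)
    (hV0 : 0 < V) (hs : 0 ≤ s) :
    P.real {ω | s ≤ ∑ i, W i ω} ≤ exp (-(s ^ 2 / (2 * (V + b * s / 3)))) := by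
  set D := V + b * s / 3
  have hD : 0 < D := by positivity
  -- the Chernoff parameter optimising the exponent `-t * s + t ^ 2 * V / (2 * (1 - t * b / 3))`
  set t := s / D
  have ht : 0 ≤ t := by positivity
  have hts : t * D = s := div_mul_cancel₀ s hD.ne'
  have hslack : 1 - t * b / 3 = V / D := by
    field_simp
    linear_combination (-b) * hts
  have htb : t * b < 3 := by
    have : 0 < 1 - t * b / 3 := hslack ▸ div_pos hV0 hD
    linarith
  have hint : Integrable (fun ω => exp (t * (∑ i, W i) ω)) P :=
    hindep.integrable_exp_mul_sum hmeas fun i _ =>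
      integrable_exp_mul_of_ae_le (hL2 i).aestronglyMeasurable (hb i) ht
  have hmgf := mgf_sum_le_exp_bernstein hmeas hindep hL2 hmean hb hb0 hV ht htb
  have hset : {ω | s ≤ ∑ i, W i ω} = {ω | s ≤ (∑ i, W i) ω} := by simp [Finset.sum_apply]
  calc P.real {ω | s ≤ ∑ i, W i ω}
      ≤ exp (-t * s) * mgf (∑ i, W i) P t := hset ▸ measure_ge_le_exp_mul_mgf s ht hint
    _ ≤ exp (-t * s) * exp (t ^ 2 * V / (2 * (1 - t * b / 3))) := by gcongr
    _ = exp (-(s ^ 2 / (2 * D))) := by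
        rw [← exp_add, hslack]
        congr 1
        field_simp
        linear_combination (t * D - s) * hts

theorem measureReal_sum_ge_le_bernstein {s : ℝ} (hmeas : ∀ i, Measurable (W i))
    (hindep : iIndepFun W P) (hL2 : ∀ i, MemLp (W i) 2 P) (hmean : ∀ i, P[W i] = 0)
    (hb : ∀ i, ∀ᵐ ω ∂P, W i ω ≤ b) (hb0 : 0 < b) (hV : ∑ i, ∫ ω, W i ω ^ 2 ∂P ≤ V)
    (hV0 : 0 ≤ V) (hs : 0 < s) :
    P.real {ω | s ≤ ∑ i, W i ω} ≤ exp (-(s ^ 2 / (2 * (V + b * s / 3)))) := by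
  -- the Chernoff argument needs `V > 0`; let the variance proxy decrease to `V`
  have hcont : ContinuousAt (fun V' => exp (-(s ^ 2 / (2 * (V' + b * s / 3))))) V := by
    have : 2 * (V + b * s / 3) ≠ 0 := by positivity
    fun_prop (disch := assumption)
  refine ge_of_tendsto (hcont.tendsto.mono_left (nhdsWithin_le_nhds (s := Set.Ioi V))) ?_
  filter_upwards [self_mem_nhdsWithin] with V' (hV' : V < V')
  exact measureReal_sum_ge_le_bernstein_of_pos hmeas hindep hL2 hmean hb hb0.le
    (hV.trans hV'.le) (hV0.trans_lt hV') hs.le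

theorem measureReal_sum_ge_le_exp_neg {L : ℝ} (hmeas : ∀ i, Measurable (W i))
    (hindep : iIndepFun W P) (hL2 : ∀ i, MemLp (W i) 2 P) (hmean : ∀ i, P[W i] = 0)
    (hb : ∀ i, ∀ᵐ ω ∂P, W i ω ≤ b) (hb0 : 0 < b) (hV : ∑ i, ∫ ω, W i ω ^ 2 ∂P ≤ V)
    (hV0 : 0 ≤ V) (hL : 0 < L) :
    P.real {ω | b * L / 3 + √((b * L / 3) ^ 2 + 2 * V * L) ≤ ∑ i, W i ω} ≤ exp (-L) := by
  set s := b * L / 3 + √((b * L / 3) ^ 2 + 2 * V * L)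
  have hsq : (s - b * L / 3) ^ 2 = (b * L / 3) ^ 2 + 2 * V * L := by
    simp only [s, add_sub_cancel_left]
    exact sq_sqrt (by positivity)
  have hs : 0 < s := by positivity
  have hL_eq : s ^ 2 / (2 * (V + b * s / 3)) = L := by
    rw [div_eq_iff (by positivity)]
    linear_combination hsq
  simpa only [hL_eq] using
    measureReal_sum_ge_le_bernstein hmeas hindep hL2 hmean hb hb0 hV hV0 hs

end Bernstein

section UnitInterval

variable {Ω : Type*} [MeasurableSpace Ω] {P : Measure Ω} [IsProbabilityMeasure P]

theorem integral_mem_Icc_of_mem_Icc {X : Ω → ℝ} (h : ∀ ω, X ω ∈ Set.Icc (0 : ℝ) 1) :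
    P[X] ∈ Set.Icc (0 : ℝ) 1 :=
  ⟨integral_nonneg fun ω => (h ω).1, by
    simpa using integral_mono_of_nonneg (ae_of_all P fun ω => (h ω).1) (integrable_const (1 : ℝ))
      (ae_of_all P fun ω => (h ω).2)⟩

theorem variance_le_one_div_four_of_mem_Icc {X : Ω → ℝ} (hX : AEMeasurable X P)
    (h : ∀ ω, X ω ∈ Set.Icc (0 : ℝ) 1) : Var[X; P] ≤ 1 / 4 := by
  have := variance_le_sq_of_bounded (ae_of_all P h) hX
  norm_num at this
  linarith

theorem integral_sq_integral_sub_le_integral {Y : Ω → ℝ} (hY : AEMeasurable Y P)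
    (h : ∀ᵐ ω ∂P, Y ω ∈ Set.Icc (0 : ℝ) 1) : ∫ ω, (P[Y] - Y ω) ^ 2 ∂P ≤ P[Y] := by
  have hmean : 0 ≤ P[Y] := integral_nonneg_of_ae (h.mono fun ω hω => hω.1)
  calc ∫ ω, (P[Y] - Y ω) ^ 2 ∂P = Var[Y; P] := by
        rw [variance_eq_integral hY]
        congr with ω
        ring
    _ ≤ (1 - P[Y]) * (P[Y] - 0) := variance_le_sub_mul_sub h hY
    _ ≤ P[Y] := by nlinarith

variable {ι : Type*} [Fintype ι] {X : ι → Ω → ℝ} {μ L : ℝ}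

theorem measureReal_sum_sub_ge_le_exp_neg (hmeas : ∀ i, Measurable (X i))
    (hindep : iIndepFun X P) (hbound : ∀ i ω, X i ω ∈ Set.Icc (0 : ℝ) 1)
    (hmean : ∀ i, P[X i] = μ) (hL : 0 < L) :
    P.real {ω | 1 * L / 3 + √((1 * L / 3) ^ 2 + 2 * (∑ i, Var[X i; P]) * L)
      ≤ ∑ i, (X i ω - μ)} ≤ exp (-L) := by
  have hL2 : ∀ i, MemLp (X i) 2 P := fun i =>
    memLp_of_bounded (ae_of_all _ (hbound i)) (hmeas i).aestronglyMeasurable 2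
  refine measureReal_sum_ge_le_exp_neg (W := fun i ω => X i ω - μ)
    (fun i => (hmeas i).sub_const μ)
    (hindep.comp (fun _ x => x - μ) fun _ => measurable_id.sub_const μ)
    (fun i => (hL2 i).sub (memLp_const μ)) (fun i => ?_) (fun i => ae_of_all _ fun ω => ?_)
    one_pos (Finset.sum_le_sum fun i _ => ?_) (Finset.sum_nonneg fun i _ => variance_nonneg _ _)
    hL
  · rw [integral_sub ((hL2 i).integrable one_le_two) (integrable_const μ), hmean i]
    simp
  · have hμ := hmean i ▸ integral_mem_Icc_of_mem_Icc (hbound i)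
    linarith [(hbound i ω).2, hμ.1]
  · rw [variance_eq_integral (hmeas i).aemeasurable, hmean i]

theorem measureReal_sum_variance_sub_sq_ge_le_exp_neg (hmeas : ∀ i, Measurable (X i))
    (hindep : iIndepFun X P) (hbound : ∀ i ω, X i ω ∈ Set.Icc (0 : ℝ) 1)
    (hmean : ∀ i, P[X i] = μ) (hL : 0 < L) :
    P.real {ω | 1 / 4 * L / 3 + √((1 / 4 * L / 3) ^ 2 + 2 * (∑ i, Var[X i; P]) * L)
      ≤ ∑ i, (Var[X i; P] - (X i ω - μ) ^ 2)} ≤ exp (-L) := by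
  have hsq_meas : ∀ i, Measurable fun ω => (X i ω - μ) ^ 2 := fun i =>
    ((hmeas i).sub_const μ).pow_const 2
  have hsq_bound : ∀ i ω, (X i ω - μ) ^ 2 ∈ Set.Icc (0 : ℝ) 1 := fun i ω => by
    obtain ⟨hμ0, hμ1⟩ := hmean i ▸ integral_mem_Icc_of_mem_Icc (hbound i)
    obtain ⟨hx0, hx1⟩ := hbound i ω
    constructor <;> nlinarith
  have hsq_L2 : ∀ i, MemLp (fun ω => (X i ω - μ) ^ 2) 2 P := fun i =>
    memLp_of_bounded (ae_of_all _ (hsq_bound i)) (hsq_meas i).aestronglyMeasurable 2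
  have hsq_mean : ∀ i, ∫ ω, (X i ω - μ) ^ 2 ∂P = Var[X i; P] := fun i => by
    rw [variance_eq_integral (hmeas i).aemeasurable, hmean i]
  refine measureReal_sum_ge_le_exp_neg (W := fun i ω => Var[X i; P] - (X i ω - μ) ^ 2)
    (fun i => measurable_const.sub (hsq_meas i))
    (hindep.comp (fun i x => Var[X i; P] - (x - μ) ^ 2)
      fun _ => measurable_const.sub ((measurable_id.sub_const μ).pow_const 2))
    (fun i => (memLp_const _).sub (hsq_L2 i)) (fun i => ?_) (fun i => ae_of_all _ fun ω => ?_)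
    (by norm_num) (Finset.sum_le_sum fun i _ => ?_)
    (Finset.sum_nonneg fun i _ => variance_nonneg _ _) hL
  · rw [integral_sub (integrable_const _) ((hsq_L2 i).integrable one_le_two), hsq_mean i]
    simp
  · linarith [variance_le_one_div_four_of_mem_Icc (P := P) (hmeas i).aemeasurable (hbound i),
      sq_nonneg (X i ω - μ)]
  · rw [← hsq_mean i]
    exact integral_sq_integral_sub_le_integral (hsq_meas i).aemeasurable
      (ae_of_all _ (hsq_bound i))

end UnitInterval

theorem sq_sub_mul_add_le_sub_mul_sqrt {e t w : ℝ} (he : 0 < e) (ht : 4 * e ≤ t)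
    (hw : t ^ 2 - 2 * e * t ≤ w) :
    t ^ 2 - 8 * e * t + 6 * e ^ 2 ≤ w - 6 * e * √((e / 4) ^ 2 + w) := by
  set r := √((e / 4) ^ 2 + w)
  have hr : r ^ 2 = (e / 4) ^ 2 + w := sq_sqrt (by nlinarith)
  -- `r ↦ r ^ 2 - 6 * e * r` increases for `r ≥ 3 * e`
  rcases le_total r (t - e) with hrt | hrt
  · nlinarith
  · nlinarith

theorem le_sqrt_add_of_bernstein_bounds {e v S t : ℝ} (he : 0 < e) (hv : v ≤ 1 / 4)
    (hS : 0 ≤ S) (hA : t < e + √(e ^ 2 + 6 * e * v))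
    (hB : v - (S + t ^ 2) < e / 4 + √((e / 4) ^ 2 + 6 * e * v)) :
    t ≤ √(6 * e * S) + 9 * e := by
  by_contra! h
  have ht : 9 * e < t := by linarith [sqrt_nonneg (6 * e * S)]
  have hS' : 6 * e * S < (t - 9 * e) ^ 2 := (sqrt_lt' (by linarith)).1 (by linarith)
  have hA' : t ^ 2 - 2 * e * t < 6 * e * v := by
    have := (lt_sqrt (by linarith : 0 ≤ t - e)).1 (by linarith : t - e < √(e ^ 2 + 6 * e * v))
    linarith
  have hquad : 6 * t ^ 2 < 12 * e * t + 9 * e := by nlinarith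
  rcases le_or_gt (1 / 24) e with he24 | he24
  · -- `t * (t - 2 * e) > 63 * e ^ 2`, but `6 * e * v ≤ 3 * e / 2 ≤ 36 * e ^ 2`
    nlinarith
  · have hkey := sq_sub_mul_add_le_sub_mul_sqrt he (by linarith) hA'.le
    have h10 : 10 * t < 76.5 * e + 6 * t ^ 2 := by nlinarith
    -- with `hquad`: `t * (10 - 12 * e) < 85.5 * e ≤ 9 * e * (10 - 12 * e)`
    nlinarith

theorem sum_sq_sub_eq_sum_sq_sub_mean_add {N : ℕ} (hN : 0 < N) (x : Fin N → ℝ) (c : ℝ) :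
    ∑ i, (x i - c) ^ 2
      = ∑ i, (x i - (1 / N) * ∑ j, x j) ^ 2 + N * ((1 / N) * ∑ j, x j - c) ^ 2 := by
  have hN' : (N : ℝ) ≠ 0 := by positivity
  have hdev : ∑ i, (x i - (1 / N) * ∑ j, x j) = 0 := by
    rw [Finset.sum_sub_distrib, Finset.sum_const, Finset.card_univ, Fintype.card_fin,
      nsmul_eq_mul, ← mul_assoc, mul_one_div_cancel hN', one_mul, sub_self]
  calc ∑ i, (x i - c) ^ 2
      = ∑ i, ((x i - (1 / N) * ∑ j, x j) ^ 2
          + 2 * ((1 / N) * ∑ j, x j - c) * (x i - (1 / N) * ∑ j, x j)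
          + ((1 / N) * ∑ j, x j - c) ^ 2) :=
        Finset.sum_congr rfl fun i _ => by ring
    _ = _ := by
        rw [Finset.sum_add_distrib, Finset.sum_add_distrib, ← Finset.mul_sum, hdev]
        simp

theorem ge_empirical_bernstein_bound {N : ℕ} (hN : 0 < N) {L μ : ℝ} (hL : 0 < L)
    (x v : Fin N → ℝ) (hv : ∀ i, v i ≤ 1 / 4)
    (hA : ∑ i, (x i - μ) < 1 * L / 3 + √((1 * L / 3) ^ 2 + 2 * (∑ i, v i) * L))
    (hB : ∑ i, (v i - (x i - μ) ^ 2)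
      < 1 / 4 * L / 3 + √((1 / 4 * L / 3) ^ 2 + 2 * (∑ i, v i) * L)) :
    μ ≥ (1 / N) * ∑ i, x i - √(2 * ((1 / N) * ∑ i, (x i - (1 / N) * ∑ j, x j) ^ 2) * L / N)
      - 3 * L / N := by
  have hN' : (0 : ℝ) < N := by exact_mod_cast hN
  obtain ⟨m, hm⟩ : ∃ m, m = (1 / N : ℝ) * ∑ j, x j := ⟨_, rfl⟩
  obtain ⟨S, hS⟩ : ∃ S, S = (1 / N : ℝ) * ∑ i, (x i - m) ^ 2 := ⟨_, rfl⟩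
  obtain ⟨e, he⟩ : ∃ e, e = L / (3 * N) := ⟨_, rfl⟩
  obtain ⟨w, hw⟩ : ∃ w, w = (∑ i, v i) / N := ⟨_, rfl⟩
  rw [← hm, ← hS]
  have hscale (b : ℝ) : (b * L / 3 + √((b * L / 3) ^ 2 + 2 * (∑ i, v i) * L)) / N
      = b * e + √((b * e) ^ 2 + 6 * e * w) := by
    rw [add_div, ← sqrt_sq hN'.le, ← sqrt_div' _ (sq_nonneg _), sqrt_sq hN'.le, he, hw]
    congr 2
    · field_simp
    · field_simp
      ring
  have hA' : m - μ < e + √(e ^ 2 + 6 * e * w) := by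
    have := div_lt_div_of_pos_right hA hN'
    rwa [hscale, one_mul, Finset.sum_sub_distrib, Finset.sum_const, Finset.card_univ,
      Fintype.card_fin, nsmul_eq_mul, sub_div, mul_div_cancel_left₀ _ hN'.ne', div_eq_inv_mul,
      ← one_div, ← hm] at this
  have hB' : w - (S + (m - μ) ^ 2) < e / 4 + √((e / 4) ^ 2 + 6 * e * w) := by
    have := div_lt_div_of_pos_right hB hN'
    rwa [hscale, one_div_mul_eq_div, Finset.sum_sub_distrib, sub_div, ← hw,
      sum_sq_sub_eq_sum_sq_sub_mean_add hN, ← hm, add_div, mul_div_cancel_left₀ _ hN'.ne',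
      div_eq_inv_mul, ← one_div, ← hS] at this
  have hw4 : w ≤ 1 / 4 := by
    rw [hw, div_le_iff₀ hN']
    simpa [mul_comm] using Finset.sum_le_sum fun i (_ : i ∈ Finset.univ) => hv i
  have hdev := le_sqrt_add_of_bernstein_bounds (by rw [he]; positivity) hw4
    (by rw [hS]; positivity) hA' hB'
  have h1 : 2 * S * L / N = 6 * e * S := by rw [he]; field_simp; ring
  have h2 : 3 * L / N = 9 * e := by rw [he]; field_simp; ring
  rw [h1, h2]
  linarith

theorem empirical_bernstein_lower_general
    {Ω : Type*} [MeasurableSpace Ω] (P : Measure Ω) [IsProbabilityMeasure P]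
    (N : ℕ) (hN : 1 ≤ N) (X : Fin N → Ω → ℝ) (μ : ℝ)
    (hmeas : ∀ i, Measurable (X i))
    (hindep : iIndepFun X P)
    (hbound : ∀ i ω, X i ω ∈ Set.Icc (0 : ℝ) 1)
    (hmean : ∀ i, ∫ ω, X i ω ∂P = μ)
    (δ : ℝ) (hδ : δ ∈ Set.Ioo (0 : ℝ) 1) :
    ENNReal.ofReal (1 - δ) ≤
      P {ω | μ ≥ (1 / N) * ∑ i, X i ω
          - Real.sqrt (2 * ((1 / N) * ∑ i, (X i ω - (1 / N) * ∑ j, X j ω) ^ 2)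
              * Real.log (3 / δ) / N)
          - 3 * Real.log (3 / δ) / N} := by
  obtain ⟨hδ0, hδ1⟩ := hδ
  have hL : 0 < log (3 / δ) := log_pos (by rw [lt_div_iff₀ hδ0]; linarith)
  have hexp : exp (-log (3 / δ)) = δ / 3 := by rw [exp_neg, exp_log (by positivity), inv_div]
  have hA := measureReal_sum_sub_ge_le_exp_neg hmeas hindep hbound hmean hL
  have hB := measureReal_sum_variance_sub_sq_ge_le_exp_neg hmeas hindep hbound hmean hL
  rw [hexp] at hA hB
  refine ofReal_one_sub_le_measure_of_compl_subset_union (fun ω hω => ?_)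
    ((add_le_add hA hB).trans (by linarith))
  by_contra hgood
  simp only [Set.mem_union, Set.mem_ofPred_eq, not_or, not_le] at hgood
  exact hω (ge_empirical_bernstein_bound hN hL (fun i => X i ω) (fun i => Var[X i; P])
    (fun i => variance_le_one_div_four_of_mem_Icc (hmeas i).aemeasurable (hbound i))
    hgood.1 hgood.2)

/-- Empirical Bernstein (one-sided lower) inequality: for i.i.d. random variables
`X 1, ..., X N` with values in `[0,1]` and common mean `μ`, with probability at least
`1 - δ` we have `μ ≥ μ̂ - sqrt (2 σ̂² ln(3/δ) / N) - 3 ln(3/δ) / N`, where `μ̂` is the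
empirical mean and `σ̂²` the empirical variance. -/
theorem empirical_bernstein_lower
    {Ω : Type*} [MeasurableSpace Ω] (P : Measure Ω) [IsProbabilityMeasure P]
    (N : ℕ) (hN : 1 ≤ N) (X : Fin N → Ω → ℝ) (μ : ℝ)
    (hmeas : ∀ i, Measurable (X i))
    (hindep : iIndepFun X P)
    (hident : ∀ i j, IdentDistrib (X i) (X j) P P)
    (hbound : ∀ i ω, X i ω ∈ Set.Icc (0 : ℝ) 1)
    (hmean : ∀ i, ∫ ω, X i ω ∂P = μ)
    (δ : ℝ) (hδ : δ ∈ Set.Ioo (0 : ℝ) 1) :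
    ENNReal.ofReal (1 - δ) ≤
      P {ω | μ ≥ (1 / N) * ∑ i, X i ω
          - Real.sqrt (2 * ((1 / N) * ∑ i, (X i ω - (1 / N) * ∑ j, X j ω) ^ 2)
              * Real.log (3 / δ) / N)
          - 3 * Real.log (3 / δ) / N} :=
  empirical_bernstein_lower_general P N hN X μ hmeas hindep hbound hmean δ hδ
end
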